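/- arXiv:2001.04573 — 9 statements merged into one kernel-verified Lean document; each statement's English description precedes it below -/
import Mathlib

section
/- Let I ⊆ ℝ be an interval with at least two points and f : I → I continuous with f^n = id for some odd n ≥ 1. Then f = id. -/
/-!
Restricted to `I`, `f` is a continuous bijection of an interval, hence strictly monotone or
strictly antitone; in either case `f ∘ f` is strictly monotone. A monotone map with an iterate equal
to the identity is the identity, so `f ∘ f = id`, and then `f = f^[n] = id` because `n` is odd.
-/

open Function

theorem Function.injective_of_iterate_eq_id {α : Type*} {f : α → α} {n : ℕ} (hn : n ≠ 0)
    (h : f^[n] = id) : Injective f := by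
  obtain ⟨m, rfl⟩ := Nat.exists_eq_succ_of_ne_zero hn
  rw [iterate_succ] at h
  exact Injective.of_comp (h ▸ injective_id)

theorem Monotone.eq_id_of_iterate_eq_id {α : Type*} [LinearOrder α] {f : α → α} (hf : Monotone f)
    {n : ℕ} (hn : n ≠ 0) (h : f^[n] = id) : f = id :=
  funext fun x =>
    (Commute.id_right.iterate_pos_eq_iff_map_eq hf strictMono_id (Nat.pos_of_ne_zero hn)).1
      (by rw [h, iterate_id])

theorem Continuous.eq_id_of_iterate_odd_eq_id {α : Type*} [ConditionallyCompleteLinearOrder α]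
    [TopologicalSpace α] [OrderTopology α] [DenselyOrdered α] {f : α → α} (hf : Continuous f)
    {n : ℕ} (hn : Odd n) (h : f^[n] = id) : f = id := by
  have hinj : Injective f := injective_of_iterate_eq_id hn.pos.ne' h
  have hsq_mono : StrictMono f^[2] :=
    (hf.strictMono_of_inj hinj).elim (fun hm => hm.comp hm) fun ha => ha.comp ha
  have hsq_iterate : (f^[2])^[n] = id := by
    rw [← iterate_mul, mul_comm, iterate_mul, h, iterate_id]
  have hinv : Involutive f := involutive_iff_iter_2_eq_id.2 <|
    hsq_mono.monotone.eq_id_of_iterate_eq_id hn.pos.ne' hsq_iterate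
  rw [← hinv.iterate_odd hn, h]

theorem stmt_6_general (I : Set ℝ) (hI : Convex ℝ I)
    (f : ℝ → ℝ) (hf : ContinuousOn f I) (hmap : Set.MapsTo f I I)
    (n : ℕ) (hn : Odd n)
    (hper : ∀ x ∈ I, f^[n] x = x) :
    ∀ x ∈ I, f x = x := by
  intro x hx
  have := hI.ordConnected
  -- the conditionally complete order on the subtype `I` needs a default element
  have : Inhabited I := ⟨⟨x, hx⟩⟩
  have hrestrict : hmap.restrict^[n] = id :=
    funext fun y => Subtype.ext <| by rw [hmap.iterate_restrict]; exact hper y y.2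
  exact congrArg Subtype.val <|
    congrFun ((hf.mapsToRestrict hmap).eq_id_of_iterate_odd_eq_id hn hrestrict) ⟨x, hx⟩

theorem stmt_6 (I : Set ℝ) (hI : Convex ℝ I) (hI2 : ∃ a ∈ I, ∃ b ∈ I, a ≠ b)
    (f : ℝ → ℝ) (hf : ContinuousOn f I) (hmap : Set.MapsTo f I I)
    (n : ℕ) (hn : Odd n) (hn1 : 1 ≤ n)
    (hper : ∀ x ∈ I, f^[n] x = x) :
    ∀ x ∈ I, f x = x :=
  stmt_6_general I hI f hf hmap n hn hper
end

section
/- Every continuous involution f : ℝ → ℝ (f ∘ f = id, f ≠ id) is topologically conjugate to x ↦ -x; that is, there exists a homeomorphism φ : ℝ → ℝ with φ ∘ f = (-id) ∘ φ. -/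
/-!
A continuous involution `f` of `ℝ` is injective, hence strictly monotone or strictly
antitone; a monotone involution of a linear order is the identity, so `f` is antitone.
Then `φ x = x - f x` is continuous, strictly increasing and unbounded in both directions,
hence a homeomorphism, and `φ (f x) = f x - x = - φ x`.
-/

open Filter Function

theorem Function.Involutive.eq_id_of_monotone {α : Type*} [LinearOrder α] {f : α → α}
    (hf : Involutive f) (hmono : Monotone f) : f = id := by
  funext x
  show f x = x
  rcases le_total (f x) x with h | h
  · exact le_antisymm h (by simpa only [hf x] using hmono h)
  · exact le_antisymm (by simpa only [hf x] using hmono h) h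

theorem Function.Involutive.strictAnti_of_continuous {α : Type*}
    [ConditionallyCompleteLinearOrder α] [TopologicalSpace α] [OrderTopology α]
    [DenselyOrdered α] {f : α → α} (hf : Involutive f) (hc : Continuous f) (hne : f ≠ id) :
    StrictAnti f :=
  (hc.strictMono_of_inj hf.injective).resolve_left
    fun hmono => hne (hf.eq_id_of_monotone hmono.monotone)

namespace Antitone

variable {f : ℝ → ℝ}

theorem strictMono_id_sub (hf : Antitone f) : StrictMono fun x => x - f x :=
  fun _ _ hab => by linarith [hf hab.le]

theorem tendsto_id_sub_atTop (hf : Antitone f) : Tendsto (fun x => x - f x) atTop atTop := by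
  refine tendsto_atTop_mono' _ ?_ (tendsto_atTop_add_const_right _ (-f 0) tendsto_id)
  filter_upwards [eventually_ge_atTop 0] with x hx
  dsimp only [id]
  linarith [hf hx]

theorem tendsto_id_sub_atBot (hf : Antitone f) : Tendsto (fun x => x - f x) atBot atBot := by
  refine tendsto_atBot_mono' _ ?_ (tendsto_atBot_add_const_right _ (-f 0) tendsto_id)
  filter_upwards [eventually_le_atBot 0] with x hx
  dsimp only [id]
  linarith [hf hx]

theorem surjective_id_sub (hf : Antitone f) (hc : Continuous f) :
    Surjective fun x => x - f x :=
  (continuous_id.sub hc).surjective hf.tendsto_id_sub_atTop hf.tendsto_id_sub_atBot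

end Antitone

theorem stmt_10 (f : ℝ → ℝ) (hf : Continuous f)
    (hinv : f ∘ f = id) (hne : f ≠ id) :
    ∃ φ : ℝ ≃ₜ ℝ, ∀ x : ℝ, φ (f x) = - φ x := by
  have hinvol : Involutive f := congrFun hinv
  have hanti : Antitone f := (hinvol.strictAnti_of_continuous hf hne).antitone
  refine ⟨(hanti.strictMono_id_sub.orderIsoOfSurjective _
    (hanti.surjective_id_sub hf)).toHomeomorph, fun x => ?_⟩
  show f x - f (f x) = -(x - f x)
  rw [hinvol x]
  ring
end

section
/- Let I ⊆ ℝ be an interval with at least two points and f : I → I differentiable with f ∘ f = f. Then f is constant or f = id. -/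
/-!
The image `E = f '' I` is an interval on which `f` is the identity. If `E` is not a point and
some `x ∈ I` has `f x < x`, then `x` lies above `E`, and `β = sup E` belongs to `I` and, by
continuity, to `E`. So `f` attains its maximum over `I` at `β`, which makes the one-sided
derivative at `β` in the direction of `x` nonpositive; but `f` is the identity on a nondegenerate
interval ending at `β`, so that derivative is `1`. Reflecting `f` gives `f x ≤ x` as well.
-/

open Set

lemma IsLocalMaxOn.hasDerivWithinAt_nonpos {f : ℝ → ℝ} {s : Set ℝ} {a b d : ℝ}
    (h : IsLocalMaxOn f s a) (hf : HasDerivWithinAt f d s a) (hab : a < b) (hs : Icc a b ⊆ s) :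
    d ≤ 0 := by
  have hcone : b - a ∈ posTangentConeAt s a :=
    sub_mem_posTangentConeAt_of_segment_subset ((segment_eq_Icc hab.le).trans_subset hs)
  have := h.hasFDerivWithinAt_nonpos hf hcone
  simp only [ContinuousLinearMap.toSpanSingleton_apply, smul_eq_mul] at this
  nlinarith

section Idempotent

variable {I : Set ℝ} {f : ℝ → ℝ}

lemma eqOn_id_image_of_idempotent (hid : ∀ x ∈ I, f (f x) = f x) : EqOn f id (f '' I) := by
  rintro _ ⟨x, hx, rfl⟩
  exact hid x hx

lemma apply_eq_self_of_mem_closure_image (hcont : ContinuousOn f I) (hmap : MapsTo f I I)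
    (hid : ∀ x ∈ I, f (f x) = f x) {y : ℝ} (hy : y ∈ closure (f '' I)) (hyI : y ∈ I) :
    f y = y :=
  (eqOn_id_image_of_idempotent hid).of_subset_closure (hcont.mono inter_subset_right)
    continuousOn_id (subset_inter subset_closure hmap.image_subset) inter_subset_left ⟨hy, hyI⟩

lemma image_lt_of_apply_lt (hI : Convex ℝ I) (hcont : ContinuousOn f I)
    (hid : ∀ x ∈ I, f (f x) = f x) {x : ℝ} (hx : x ∈ I) (hfx : f x < x) :
    ∀ y ∈ f '' I, y < x := by
  intro y hy
  by_contra! hxy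
  obtain ⟨z, hz, rfl⟩ : x ∈ f '' I :=
    (hI.isPreconnected.image f hcont).ordConnected.out (mem_image_of_mem f hx) hy ⟨hfx.le, hxy⟩
  exact hfx.ne (hid z hz)

lemma le_apply_of_idempotent (hI : Convex ℝ I) (hf : ∀ x ∈ I, DifferentiableWithinAt ℝ f I x)
    (hmap : MapsTo f I I) (hid : ∀ x ∈ I, f (f x) = f x) (hE : (f '' I).Nontrivial)
    {x : ℝ} (hx : x ∈ I) : x ≤ f x := by
  by_contra! hfx
  have hcont : ContinuousOn f I := fun y hy => (hf y hy).continuousWithinAt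
  have hlt := image_lt_of_apply_lt hI hcont hid hx hfx
  set β := sSup (f '' I)
  have hlub : IsLUB (f '' I) β := isLUB_csSup hE.nonempty ⟨x, fun y hy => (hlt y hy).le⟩
  have hβI : β ∈ I :=
    hI.ordConnected.out (hmap hx) hx ⟨hlub.1 (mem_image_of_mem f hx), hlub.2 fun y hy => (hlt y hy).le⟩
  have hfβ : f β = β :=
    apply_eq_self_of_mem_closure_image hcont hmap hid (hlub.mem_closure hE.nonempty) hβI
  have hβE : β ∈ f '' I := ⟨β, hβI, hfβ⟩
  have hβx : β < x := hlt β hβE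
  obtain ⟨u, hu, huβ⟩ : ∃ u ∈ f '' I, u < β := by
    obtain ⟨y, hy, z, hz, hyz⟩ := hE
    rcases hyz.lt_or_gt with h | h
    exacts [⟨y, hy, h.trans_le (hlub.1 hz)⟩, ⟨z, hz, h.trans_le (hlub.1 hy)⟩]
  have hIcc : Icc u β ⊆ f '' I := (hI.isPreconnected.image f hcont).ordConnected.out hu hβE
  have hd := (hf β hβI).hasDerivWithinAt
  have hd_one : derivWithin f I β = 1 :=
    (uniqueDiffOn_Icc huβ β ⟨huβ.le, le_rfl⟩).eq_deriv _ (hd.mono (hIcc.trans hmap.image_subset))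
      ((hasDerivWithinAt_id β _).congr
        (fun y hy => eqOn_id_image_of_idempotent hid (hIcc hy)) hfβ)
  have hmax : IsMaxOn f I β := fun y hy => by
    simpa only [mem_ofPred_eq, hfβ] using hlub.1 (mem_image_of_mem f hy)
  have hd_nonpos : derivWithin f I β ≤ 0 :=
    hmax.localize.hasDerivWithinAt_nonpos hd hβx (hI.ordConnected.out hβI hx)
  linarith

lemma apply_le_of_idempotent (hI : Convex ℝ I) (hf : ∀ x ∈ I, DifferentiableWithinAt ℝ f I x)
    (hmap : MapsTo f I I) (hid : ∀ x ∈ I, f (f x) = f x) (hE : (f '' I).Nontrivial)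
    {x : ℝ} (hx : x ∈ I) : f x ≤ x := by
  have hneg : ∀ {y : ℝ}, y ∈ -I ↔ -y ∈ I := Iff.rfl
  have := le_apply_of_idempotent (I := -I) (f := fun y => -f (-y)) hI.neg ?_ ?_ ?_ ?_
    (x := -x) (by simpa [hneg] using hx)
  · simpa using this
  · intro y hy
    exact ((hf (-y) hy).comp y differentiableWithinAt_id.neg fun z hz => hz).neg
  · intro y hy
    simpa [hneg] using hmap hy
  · intro y hy
    simp only [neg_neg, hid (-y) hy]
  · obtain ⟨_, ⟨a, ha, rfl⟩, _, ⟨b, hb, rfl⟩, hab⟩ := hE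
    exact ⟨-f a, ⟨-a, by simpa [hneg] using ha, by simp⟩, -f b,
      ⟨-b, by simpa [hneg] using hb, by simp⟩, by simpa using hab⟩

end Idempotent

theorem stmt_11_general (I : Set ℝ) (hI : Convex ℝ I)
    (f : ℝ → ℝ) (hf : ∀ x ∈ I, DifferentiableWithinAt ℝ f I x)
    (hmap : Set.MapsTo f I I) (hid : ∀ x ∈ I, f (f x) = f x) :
    (∃ c, ∀ x ∈ I, f x = c) ∨ (∀ x ∈ I, f x = x) := by
  rcases (f '' I).subsingleton_or_nontrivial with hE | hE
  · left
    rcases I.eq_empty_or_nonempty with rfl | ⟨a, ha⟩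
    · exact ⟨0, fun x hx => hx.elim⟩
    · exact ⟨f a, fun x hx => hE (mem_image_of_mem f hx) (mem_image_of_mem f ha)⟩
  · right
    intro x hx
    exact le_antisymm (apply_le_of_idempotent hI hf hmap hid hE hx)
      (le_apply_of_idempotent hI hf hmap hid hE hx)

theorem stmt_11 (I : Set ℝ) (hI : Convex ℝ I) (hI2 : ∃ a ∈ I, ∃ b ∈ I, a ≠ b)
    (f : ℝ → ℝ) (hf : ∀ x ∈ I, DifferentiableWithinAt ℝ f I x)
    (hmap : Set.MapsTo f I I) (hid : ∀ x ∈ I, f (f x) = f x) :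
    (∃ c, ∀ x ∈ I, f x = c) ∨ (∀ x ∈ I, f x = x) :=
  stmt_11_general I hI f hf hmap hid
end

section
/- Let I ⊆ ℝ be an interval with at least two points and f : I → I differentiable with f^3 = f. Then f is constant, f = id, or f is an involution (f^2 = id). -/
/-!
Put `g = f ∘ f`. Since `f^[3] = f`, `g` fixes every point of the interval `J = f '' I`, so `g`
is a differentiable retraction of `I` onto `J`. If `J` is a point, `f` is constant. Otherwise
suppose some `x ∈ I` lies outside `J`, and let `b` be the point of `closure J` nearest to `x`.
Fixed-point sets of continuous maps are closed, so `b ∈ J`; as `J` is a nondegenerate interval on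
which `g = id`, `g' b = 1`. But `g` takes its values in `J`, on the far side of `b` from `x`, so
`b` is an extremum of `g` on `I`; since `I ∋ x ≠ b`, this contradicts `g' b = 1`. Hence `J = I`
and `f ∘ f = id` on `I`.
-/

open Set

lemma Convex.exists_mem_closure_forall_mul_sub_nonpos {J : Set ℝ} (hJ : Convex ℝ J)
    (hne : J.Nonempty) (x : ℝ) : ∃ b ∈ closure J, ∀ y ∈ J, (x - b) * (y - b) ≤ 0 := by
  obtain ⟨b, hb, hmin⟩ := exists_norm_eq_iInf_of_complete_convex hne.closure
    isClosed_closure.isComplete hJ.closure x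
  refine ⟨b, hb, fun y hy => ?_⟩
  have := (norm_eq_iInf_iff_real_inner_le_zero hJ.closure hb).1 hmin y (subset_closure hy)
  simpa [mul_comm] using this

lemma HasDerivWithinAt.mul_sub_nonpos_of_isMaxOn {g : ℝ → ℝ} {s : Set ℝ} {a x g' : ℝ}
    (hg : HasDerivWithinAt g g' s a) (hmax : IsMaxOn g s a) (hseg : segment ℝ a x ⊆ s) :
    g' * (x - a) ≤ 0 := by
  have := hmax.localize.hasFDerivWithinAt_nonpos hg.hasFDerivWithinAt
    (sub_mem_posTangentConeAt_of_segment_subset hseg)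
  simpa [mul_comm] using this

lemma mem_of_mem_closure_of_retraction {I J : Set ℝ} {g : ℝ → ℝ} (hg : ContinuousOn g I)
    (hJI : J ⊆ I) (hgJ : MapsTo g I J) (hfix : EqOn g id J) {b : ℝ} (hbJ : b ∈ closure J)
    (hbI : b ∈ I) : b ∈ J := by
  have hgb : g b = b := hfix.of_subset_closure (hg.mono (insert_subset hbI hJI))
    continuousOn_id (subset_insert b J) (insert_subset hbJ subset_closure) (mem_insert b J)
  exact hgb ▸ hgJ hbI

theorem eqOn_id_of_retraction {I J : Set ℝ} {g : ℝ → ℝ} (hI : Convex ℝ I)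
    (hJ : Convex ℝ J) (hJnt : J.Nontrivial) (hJI : J ⊆ I)
    (hg : ∀ x ∈ I, DifferentiableWithinAt ℝ g I x) (hgJ : MapsTo g I J) (hfix : EqOn g id J) :
    EqOn g id I := by
  intro x hx
  apply hfix
  by_contra hxJ
  obtain ⟨b, hb_cl, hb⟩ := hJ.exists_mem_closure_forall_mul_sub_nonpos hJnt.nonempty x
  have hbI : b ∈ I := by
    have hgx := hb (g x) (hgJ hx)
    refine hI.ordConnected.uIcc_subset (hJI (hgJ hx)) hx ?_
    rcases lt_trichotomy x b with h | rfl | h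
    · exact mem_uIcc.2 (Or.inr ⟨h.le, by nlinarith⟩)
    · exact right_mem_uIcc
    · exact mem_uIcc.2 (Or.inl ⟨by nlinarith, h.le⟩)
  have hbJ : b ∈ J := mem_of_mem_closure_of_retraction
    (fun t ht => (hg t ht).continuousWithinAt) hJI hgJ hfix hb_cl hbI
  have hderiv : HasDerivWithinAt g 1 I b := by
    have hJd : UniqueDiffWithinAt ℝ J b :=
      uniqueDiffOn_convex hJ (hJ.nontrivial_iff_nonempty_interior.1 hJnt) b hbJ
    have hid : HasDerivWithinAt g 1 J b := (hasDerivWithinAt_id b J).congr hfix (hfix hbJ)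
    have hgd := (hg b hbI).hasDerivWithinAt
    rwa [hJd.eq_deriv J (hgd.mono hJI) hid] at hgd
  -- `g` maps `I` into `J`, which lies on the other side of `b` from `x`.
  have hmax : IsMaxOn (fun t => (x - b) * g t) I b := fun t ht => by
    have := hb (g t) (hgJ ht)
    change (x - b) * g t ≤ (x - b) * g b
    rw [hfix hbJ, id]
    nlinarith
  have := (hderiv.const_mul (x - b)).mul_sub_nonpos_of_isMaxOn hmax (hI.segment_subset hbI hx)
  have hxb : x = b := by nlinarith
  exact hxJ (hxb ▸ hbJ)

theorem stmt_12_general (I : Set ℝ) (hI : Convex ℝ I)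
    (f : ℝ → ℝ) (hf : ∀ x ∈ I, DifferentiableWithinAt ℝ f I x)
    (hmap : Set.MapsTo f I I) (hid : ∀ x ∈ I, f^[3] x = f x) :
    (∃ c, ∀ x ∈ I, f x = c) ∨ (∀ x ∈ I, f x = x) ∨ (∀ x ∈ I, f (f x) = x) := by
  rcases (f '' I).subsingleton_or_nontrivial with hJ | hJ
  · rcases hJ.eq_empty_or_singleton with hJ | ⟨c, hJ⟩
    · exact Or.inl ⟨0, fun x hx => absurd (hJ ▸ mem_image_of_mem f hx) (notMem_empty _)⟩
    · exact Or.inl ⟨c, fun x hx => by simpa [hJ] using mem_image_of_mem f hx⟩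
  · have hJconv : Convex ℝ (f '' I) := (hI.isPreconnected.image f
      fun x hx => (hf x hx).continuousWithinAt).ordConnected.convex
    have hfix : EqOn (f ∘ f) id (f '' I) := by
      rintro _ ⟨x, hx, rfl⟩
      exact hid x hx
    have hdiff : ∀ x ∈ I, DifferentiableWithinAt ℝ (f ∘ f) I x :=
      fun x hx => (hf (f x) (hmap hx)).comp x (hf x hx) hmap
    have hmapsTo : MapsTo (f ∘ f) I (f '' I) := fun x hx => mem_image_of_mem f (hmap hx)
    exact Or.inr (Or.inr (eqOn_id_of_retraction hI hJconv hJ hmap.image_subset hdiff hmapsTo hfix))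

theorem stmt_12 (I : Set ℝ) (hI : Convex ℝ I) (hI2 : ∃ a ∈ I, ∃ b ∈ I, a ≠ b)
    (f : ℝ → ℝ) (hf : ∀ x ∈ I, DifferentiableWithinAt ℝ f I x)
    (hmap : Set.MapsTo f I I) (hid : ∀ x ∈ I, f^[3] x = f x) :
    (∃ c, ∀ x ∈ I, f x = c) ∨ (∀ x ∈ I, f x = x) ∨ (∀ x ∈ I, f (f x) = x) :=
  stmt_12_general I hI f hf hmap hid
end

section
/- Let n > k ≥ 0 with n - k odd, I ⊆ ℝ an interval, and f : I → I continuous. Then f^n = f^k if and only if f^{k+1} = f^k. -/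
/-!
If `f^[n] = f^[k]` on `I`, then `f` permutes the interval `J = f^[k] '' I` with `f^[n - k] = id`
on it. An injective continuous self-map of an interval is strictly monotone or strictly antitone,
so `f ∘ f` is strictly monotone on `J`; a strictly monotone map has no periodic points other than
fixed points, hence `f^[2] = id` on `J`. As `n - k` is odd, `gcd (n - k) 2 = 1`, and so `f = id`
on `J`, i.e. `f^[k + 1] = f^[k]` on `I`.
-/

open Function Set

theorem StrictMono.isFixedPt_of_isPeriodicPt {α : Type*} [LinearOrder α] {f : α → α}
    (hf : StrictMono f) {m : ℕ} (hm : 0 < m) {x : α} (hx : IsPeriodicPt f m x) :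
    IsFixedPt f x :=
  ((Commute.id_left.iterate_pos_eq_iff_map_eq monotone_id hf hm).1
    (by simpa using hx.eq.symm)).symm

section OddPeriod

variable {α : Type*} [ConditionallyCompleteLinearOrder α] [TopologicalSpace α] [OrderTopology α]
  [DenselyOrdered α]

theorem Continuous.isFixedPt_of_isPeriodicPt_odd {g : α → α} (hg : Continuous g) {m : ℕ}
    (hm : Odd m) (hper : ∀ x, IsPeriodicPt g m x) (x : α) : IsFixedPt g x := by
  have hinj : Injective g := by
    obtain ⟨m', rfl⟩ := Nat.exists_eq_succ_of_ne_zero hm.pos.ne'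
    refine Injective.of_comp (f := g^[m']) ?_
    rw [← iterate_succ, funext hper]
    exact injective_id
  have hmono : StrictMono g^[2] := by
    rw [iterate_succ, iterate_one]
    exact (hg.strictMono_of_inj hinj).elim (fun h => h.comp h) (fun h => h.comp h)
  have h2 : IsPeriodicPt g 2 x := hmono.isFixedPt_of_isPeriodicPt hm.pos ((hper x).iterate 2)
  simpa [IsPeriodicPt, Nat.coprime_two_right.2 hm] using (hper x).gcd h2

theorem ContinuousOn.isFixedPt_of_isPeriodicPt_odd {s : Set α} (hs : s.OrdConnected)
    {g : α → α} (hg : ContinuousOn g s) (hmaps : MapsTo g s s) {m : ℕ} (hm : Odd m)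
    (hper : ∀ x ∈ s, IsPeriodicPt g m x) {x : α} (hx : x ∈ s) : IsFixedPt g x := by
  have : Inhabited s := ⟨⟨x, hx⟩⟩
  have hper' : ∀ y : s, IsPeriodicPt (hmaps.restrict g s s) m y := fun y =>
    Subtype.ext <| by simpa [hmaps.iterate_restrict] using (hper y y.2).eq
  exact congrArg Subtype.val <|
    (hg.mapsToRestrict hmaps).isFixedPt_of_isPeriodicPt_odd hm hper' ⟨x, hx⟩

end OddPeriod

theorem stmt_13 (n k : ℕ) (hkn : k < n) (hodd : Odd (n - k))
    (I : Set ℝ) (hI : Convex ℝ I)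
    (f : ℝ → ℝ) (hf : ContinuousOn f I) (hmap : Set.MapsTo f I I) :
    (∀ x ∈ I, f^[n] x = f^[k] x) ↔ (∀ x ∈ I, f^[k + 1] x = f^[k] x) := by
  have hnk : n - k + k = n := Nat.sub_add_cancel hkn.le
  simp only [iterate_succ_apply']
  constructor
  · intro h x hx
    have hJ : (f^[k] '' I).OrdConnected :=
      (hI.isPreconnected.image _ (hf.iterate hmap k)).ordConnected
    have hmapJ : MapsTo f (f^[k] '' I) (f^[k] '' I) := by
      rintro _ ⟨z, hz, rfl⟩
      exact ⟨f z, hmap hz, ((Commute.self_iterate f k).eq z).symm⟩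
    have hper : ∀ y ∈ f^[k] '' I, IsPeriodicPt f (n - k) y := by
      rintro _ ⟨z, hz, rfl⟩
      rw [IsPeriodicPt, IsFixedPt, ← iterate_add_apply, hnk, h z hz]
    exact (hf.mono (hmap.iterate k).image_subset).isFixedPt_of_isPeriodicPt_odd hJ hmapJ hodd hper
      (mem_image_of_mem _ hx)
  · intro h x hx
    rw [← hnk, iterate_add_apply]
    exact (IsFixedPt.iterate (h x hx) _).eq
end

section
/- Let n > k ≥ 0 with n - k even and positive, I ⊆ ℝ an interval, and f : I → I continuous. Then f^n = f^k if and only if f^{k+2} = f^k. -/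
/-!
If `f^n = f^k` on `I`, then on the interval `J = f^k(I)` the map `f` is a continuous bijection
with `f^(n-k) = id`. Being injective and continuous on an interval, `f` is strictly monotone or
strictly antitone there, so `f` or `f ∘ f` is a monotone self-map of `J`; a monotone map fixes
each of its periodic points, whence `f^2 = id` on `J`, i.e. `f^(k+2) = f^k` on `I`. Conversely,
if every `f^k x` has period 2 it also has period `n - k`.
-/

open Set Function

theorem Set.OrdConnected.strictMonoOn_or_strictAntiOn_of_injOn
    {α δ : Type*} [ConditionallyCompleteLinearOrder α] [TopologicalSpace α] [OrderTopology α]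
    [DenselyOrdered α] [LinearOrder δ] [TopologicalSpace δ] [OrderClosedTopology δ]
    {f : α → δ} {s : Set α} (hs : s.OrdConnected) (hc : ContinuousOn f s) (hi : InjOn f s) :
    StrictMonoOn f s ∨ StrictAntiOn f s := by
  by_contra! h
  obtain ⟨⟨x₁, hx₁, y₁, hy₁, hxy₁, hf₁⟩, ⟨x₂, hx₂, y₂, hy₂, hxy₂, hf₂⟩⟩ :
      (∃ x ∈ s, ∃ y ∈ s, x < y ∧ f y ≤ f x) ∧ (∃ x ∈ s, ∃ y ∈ s, x < y ∧ f x ≤ f y) := by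
    simpa [StrictMonoOn, StrictAntiOn] using h
  set a := min x₁ x₂
  set b := max y₁ y₂
  have hIcc : Icc a b ⊆ s := hs.out (min_rec' (· ∈ s) hx₁ hx₂) (max_rec' (· ∈ s) hy₁ hy₂)
  have mem {x y : α} (hx : x ∈ s) (hy : y ∈ s) (hxy : x < y) (ha : a ≤ x) (hb : y ≤ b) :
      x ∈ Icc a b ∧ y ∈ Icc a b :=
    ⟨⟨ha, hxy.le.trans hb⟩, ⟨ha.trans hxy.le, hb⟩⟩
  obtain ⟨hx₁', hy₁'⟩ := mem hx₁ hy₁ hxy₁ (min_le_left _ _) (le_max_left _ _)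
  obtain ⟨hx₂', hy₂'⟩ := mem hx₂ hy₂ hxy₂ (min_le_right _ _) (le_max_right _ _)
  rcases ContinuousOn.strictMonoOn_of_injOn_Icc' (hx₁'.1.trans hx₁'.2) (hc.mono hIcc)
      (hi.mono hIcc) with hmono | hanti
  · exact (hmono hx₁' hy₁' hxy₁).not_ge hf₁
  · exact (hanti hx₂' hy₂' hxy₂).not_ge hf₂

theorem MonotoneOn.isFixedPt_of_isPeriodicPt {α : Type*} [LinearOrder α] {f : α → α}
    {s : Set α} (hmono : MonotoneOn f s) (hmaps : MapsTo f s s) {m : ℕ} (hm : 0 < m) {y : α}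
    (hy : y ∈ s) (hper : IsPeriodicPt f m y) : IsFixedPt f y := by
  have hmono' : Monotone (hmaps.restrict f s s) := fun a b hab => hmono a.2 b.2 hab
  have key := (Commute.id_right (f := hmaps.restrict f s s)).iterate_pos_eq_iff_map_eq hmono'
    strictMono_id hm (x := ⟨y, hy⟩)
  simp only [iterate_id, id, Subtype.ext_iff, MapsTo.coe_iterate_restrict,
    MapsTo.val_restrict_apply] at key
  exact key.mp hper

theorem Set.OrdConnected.isPeriodicPt_two_of_isPeriodicPt {α : Type*}
    [ConditionallyCompleteLinearOrder α] [TopologicalSpace α] [OrderTopology α]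
    [DenselyOrdered α] {f : α → α} {J : Set α} (hJ : J.OrdConnected) (hc : ContinuousOn f J)
    (hmaps : MapsTo f J J) {m : ℕ} (hm : 0 < m) (hper : ∀ y ∈ J, IsPeriodicPt f m y) :
    ∀ y ∈ J, IsPeriodicPt f 2 y := by
  have hleft : LeftInvOn f^[m - 1] f J := fun y hy => by
    rw [← iterate_succ_apply, Nat.succ_eq_add_one, Nat.sub_one_add_one hm.ne']
    exact hper y hy
  intro y hy
  rcases hJ.strictMonoOn_or_strictAntiOn_of_injOn hc hleft.injOn with hmono | hanti
  · have hfix := hmono.monotoneOn.isFixedPt_of_isPeriodicPt hmaps hm hy (hper y hy)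
    exact hfix.isPeriodicPt 2
  · have hmono2 : MonotoneOn f^[2] J := hanti.antitoneOn.comp hanti.antitoneOn hmaps
    exact hmono2.isFixedPt_of_isPeriodicPt (hmaps.iterate 2) hm hy ((hper y hy).iterate 2)

theorem stmt_14 (n k : ℕ) (hkn : k < n) (heven : Even (n - k))
    (I : Set ℝ) (hI : Convex ℝ I)
    (f : ℝ → ℝ) (hf : ContinuousOn f I) (hmap : Set.MapsTo f I I) :
    (∀ x ∈ I, f^[n] x = f^[k] x) ↔ (∀ x ∈ I, f^[k + 2] x = f^[k] x) := by
  have hn : n = (n - k) + k := by omega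
  constructor
  · intro H x hx
    set J := f^[k] '' I
    have hJ : J.OrdConnected := (hI.isPreconnected.image _ (hf.iterate hmap k)).ordConnected
    have hper : ∀ y ∈ J, IsPeriodicPt f (n - k) y := by
      rintro _ ⟨z, hz, rfl⟩
      rw [IsPeriodicPt, IsFixedPt, ← iterate_add_apply, ← hn]
      exact H z hz
    have h2 := hJ.isPeriodicPt_two_of_isPeriodicPt (hf.mono (hmap.iterate k).image_subset)
      ((Commute.iterate_self f k).mapsTo_image hmap) (by omega) hper _ (mem_image_of_mem _ hx)
    rwa [IsPeriodicPt, IsFixedPt, ← iterate_add_apply, add_comm] at h2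
  · intro H x hx
    obtain ⟨r, hr⟩ := heven
    have h2 : IsPeriodicPt f 2 (f^[k] x) := by
      rw [IsPeriodicPt, IsFixedPt, ← iterate_add_apply, add_comm]
      exact H x hx
    rw [hn, iterate_add_apply, hr, ← two_mul]
    exact h2.mul_const r
end

section
/- Let f : ℝ → ℝ be analytic with f^n = f^k for some n > k ≥ 0, and suppose f is not periodic (i.e. f^m ≠ id for all m ≥ 1). Then f is constant. -/
/-!
If `f` is not constant, its range contains an open interval, so an analytic `g` with `g ∘ f`
constant is constant on that interval and hence everywhere; inductively no iterate `f^[j]` is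
constant. Then `f^[n-k]` is the identity on the range of `f^[k]`, which contains an interval,
so `f^[n-k] = id` by the identity principle, against the hypothesis.
-/

open Set Function

theorem Continuous.nonempty_interior_range {X α : Type*} [TopologicalSpace X] [PreconnectedSpace X]
    [LinearOrder α] [DenselyOrdered α] [TopologicalSpace α] [OrderClosedTopology α]
    {f : X → α} (hf : Continuous f) (hfr : (range f).Nontrivial) :
    (interior (range f)).Nonempty := by
  obtain ⟨_, ⟨a, rfl⟩, _, ⟨b, rfl⟩, hab⟩ := hfr
  wlog hlt : f a < f b generalizing a b
  · exact this b a hab.symm (hab.lt_or_gt.resolve_left hlt)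
  obtain ⟨y, hy⟩ := nonempty_Ioo.mpr hlt
  have hsub : Ioo (f a) (f b) ⊆ range f :=
    Ioo_subset_Icc_self.trans (intermediate_value_univ a b hf)
  exact ⟨y, isOpen_Ioo.subset_interior_iff.mpr hsub hy⟩

section Analytic

variable {𝕜 E F : Type*} [NontriviallyNormedField 𝕜] [NormedAddCommGroup E] [NormedSpace 𝕜 E]
  [NormedAddCommGroup F] [NormedSpace 𝕜 F]

theorem AnalyticOnNhd.eq_of_eqOn_of_nonempty_interior [PreconnectedSpace E] {f g : E → F}
    (hf : AnalyticOnNhd 𝕜 f univ) (hg : AnalyticOnNhd 𝕜 g univ) {s : Set E}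
    (hs : (interior s).Nonempty) (hfg : EqOn f g s) : f = g := by
  obtain ⟨z, hz⟩ := hs
  exact hf.eq_of_eventuallyEq hg (Filter.eventuallyEq_of_mem (mem_interior_iff_mem_nhds.mp hz) hfg)

theorem AnalyticOnNhd.iterate {f : E → E} (hf : AnalyticOnNhd 𝕜 f univ) (n : ℕ) :
    AnalyticOnNhd 𝕜 f^[n] univ := by
  induction n with
  | zero => exact analyticOnNhd_id
  | succ n ih => rw [iterate_succ']; exact hf.comp ih (mapsTo_univ _ _)

end Analytic

theorem AnalyticOnNhd.nontrivial_range_comp {X F : Type*} [TopologicalSpace X]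
    [PreconnectedSpace X] [NormedAddCommGroup F] [NormedSpace ℝ F] {g : ℝ → F} {f : X → ℝ}
    (hg : AnalyticOnNhd ℝ g univ) (hf : Continuous f) (hgr : (range g).Nontrivial)
    (hfr : (range f).Nontrivial) : (range (g ∘ f)).Nontrivial := by
  by_contra hc
  rw [not_nontrivial_iff] at hc
  obtain ⟨_, x₀, rfl⟩ := hfr.nonempty
  have hconst : g = fun _ => g (f x₀) := by
    refine hg.eq_of_eqOn_of_nonempty_interior analyticOnNhd_const
      (hf.nonempty_interior_range hfr) ?_
    rintro _ ⟨x, rfl⟩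
    exact hc (mem_range_self x) (mem_range_self x₀)
  exact hgr.not_subsingleton (hconst ▸ subsingleton_singleton.anti range_const_subset)

theorem AnalyticOnNhd.nontrivial_range_iterate {f : ℝ → ℝ} (hf : AnalyticOnNhd ℝ f univ)
    (hfr : (range f).Nontrivial) (n : ℕ) : (range f^[n]).Nontrivial := by
  induction n with
  | zero => simpa using nontrivial_univ
  | succ n ih => rw [iterate_succ]; exact (hf.iterate n).nontrivial_range_comp hf.continuous ih hfr

theorem AnalyticOnNhd.iterate_eq_id_of_iterate_add_eq {f : ℝ → ℝ} (hf : AnalyticOnNhd ℝ f univ)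
    {m k : ℕ} (h : f^[m + k] = f^[k]) (hkr : (range f^[k]).Nontrivial) : f^[m] = id := by
  refine (hf.iterate m).eq_of_eqOn_of_nonempty_interior analyticOnNhd_id
    ((hf.iterate k).continuous.nonempty_interior_range hkr) ?_
  rintro _ ⟨x, rfl⟩
  rw [← iterate_add_apply, h, id]

theorem stmt_15 (f : ℝ → ℝ) (hf : ∀ x : ℝ, AnalyticAt ℝ f x)
    (n k : ℕ) (hkn : k < n) (h : f^[n] = f^[k])
    (hnp : ∀ m : ℕ, 1 ≤ m → f^[m] ≠ id) :
    ∃ c, f = fun _ => c := by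
  by_contra hc
  have hfr : (range f).Nontrivial := by
    rw [← not_subsingleton_iff]
    exact fun hs => hc ⟨f 0, funext fun x => hs (mem_range_self x) (mem_range_self 0)⟩
  have han : AnalyticOnNhd ℝ f univ := fun x _ => hf x
  refine hnp (n - k) (by omega)
    (han.iterate_eq_id_of_iterate_add_eq ?_ (han.nontrivial_range_iterate hfr k))
  rwa [Nat.sub_add_cancel hkn.le]
end

section
/- Every entire (holomorphic on ℂ) injective function f : ℂ → ℂ satisfying f^m = id for some m ≥ 1 is of the form f(z) = az + b with a^m = 1; consequently every nonconstant entire solution of f^n = f^k (n > k ≥ 0) is an affine map z ↦ az + b with a an (n-k)-th root of unity. -/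
/-!
If `f` is entire and `f^[m] = id`, then `f^[m - 1]` is an entire inverse of `f`, so `f` tends to
`∞` at `∞`. Hence `z ↦ 1 / f (1 / z)` has a removable zero of some finite order `k` at `0`, which
gives `f = O(|z| ^ k)`; the Cauchy estimates then make `f` a polynomial. Its derivative never
vanishes (chain rule against the inverse), so by the fundamental theorem of algebra its degree is
at most one.

If `f` is nonconstant and `f^[n] = f^[k]`, then `f^[n - k]` is the identity on `range f^[k]`,
which is open by the open mapping theorem, hence everywhere by the identity theorem.
-/

open Filter Topology Bornology Polynomial Asymptotics Function

theorem Function.LeftInverse.tendsto_cocompact {X Y : Type*} [TopologicalSpace X]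
    [TopologicalSpace Y] {f : X → Y} {g : Y → X} (hgf : LeftInverse g f) (hg : Continuous g) :
    Tendsto f (cocompact X) (cocompact Y) := by
  intro s hs
  obtain ⟨K, hK, hKs⟩ := mem_cocompact.mp hs
  refine mem_cocompact.mpr ⟨g '' K, hK.image hg, fun x hx => hKs fun hfx => hx ?_⟩
  exact ⟨f x, hfx, hgf x⟩

theorem deriv_ne_zero_of_leftInverse {𝕜 : Type*} [NontriviallyNormedField 𝕜] {f g : 𝕜 → 𝕜}
    {x : 𝕜} (hgf : LeftInverse g f) (hg : DifferentiableAt 𝕜 g (f x))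
    (hf : DifferentiableAt 𝕜 f x) : deriv f x ≠ 0 := by
  intro h
  have := deriv_comp x hg hf
  rw [show g ∘ f = id from funext hgf, deriv_id, h, mul_zero] at this
  exact one_ne_zero this

theorem Polynomial.natDegree_le_one_of_eval_derivative_ne_zero {K : Type*} [Field K]
    [IsAlgClosed K] [CharZero K] {p : K[X]} (hp : ∀ x, p.derivative.eval x ≠ 0) :
    p.natDegree ≤ 1 := by
  have hdeg : p.derivative.degree = 0 := by
    by_contra h
    obtain ⟨x, hx⟩ := IsAlgClosed.exists_root p.derivative h
    exact hp x hx
  have : p.derivative.natDegree = 0 := natDegree_eq_of_degree_eq_some hdeg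
  rw [natDegree_derivative] at this
  omega

theorem pow_eq_one_of_iterate_eq_id {R : Type*} [CommRing R] {a b : R} {m : ℕ}
    (h : (fun z => a * z + b)^[m] = id) : a ^ m = 1 := by
  have hiter : ∀ i : ℕ, ∃ c : R, ∀ z, (fun z => a * z + b)^[i] z = a ^ i * z + c := by
    intro i
    induction i with
    | zero => exact ⟨0, by simp⟩
    | succ i ih =>
      obtain ⟨c, hc⟩ := ih
      exact ⟨a ^ i * b + c, fun z => by rw [iterate_succ_apply, hc]; ring⟩
  obtain ⟨c, hc⟩ := hiter m
  have h₀ := hc 0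
  have h₁ := hc 1
  rw [h] at h₀ h₁
  simp only [id_eq, mul_zero, zero_add, mul_one] at h₀ h₁
  rw [← h₀, add_zero] at h₁
  exact h₁.symm

theorem Differentiable.analyticAt_update_inv_comp_inv {f : ℂ → ℂ} (hf : Differentiable ℂ f)
    (hlim : Tendsto f (cobounded ℂ) (cobounded ℂ)) :
    AnalyticAt ℂ (update (fun z => (f z⁻¹)⁻¹) 0 0) 0 := by
  have hne : ∀ᶠ z in 𝓝[≠] 0, f z⁻¹ ≠ 0 :=
    (hlim.comp tendsto_inv₀_nhdsNE_zero).eventually (eventually_ne_cobounded 0)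
  refine Complex.analyticAt_of_differentiable_on_punctured_nhds_of_continuousAt ?_ ?_
  · filter_upwards [hne, self_mem_nhdsWithin] with z hz (hz0 : z ≠ 0)
    refine (((hf _).comp z (differentiableAt_inv hz0)).inv hz).congr_of_eventuallyEq ?_
    filter_upwards [isOpen_ne.mem_nhds hz0] with w (hw : w ≠ 0)
    exact update_of_ne hw _ _
  · exact continuousAt_update_same.mpr
      (tendsto_inv₀_cobounded.comp (hlim.comp tendsto_inv₀_nhdsNE_zero))

theorem Differentiable.exists_isBigO_pow_of_tendsto_cobounded {f : ℂ → ℂ}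
    (hf : Differentiable ℂ f) (hlim : Tendsto f (cobounded ℂ) (cobounded ℂ)) :
    ∃ k : ℕ, f =O[cobounded ℂ] (· ^ k) := by
  set H := update (fun z => (f z⁻¹)⁻¹) 0 0
  have hH_eq : ∀ᶠ z in 𝓝[≠] 0, H z = (f z⁻¹)⁻¹ :=
    eventually_mem_nhdsWithin.mono fun z hz => update_of_ne hz _ _
  have hH_ne : ∀ᶠ z in 𝓝[≠] 0, H z ≠ 0 := by
    filter_upwards [hH_eq, (hlim.comp tendsto_inv₀_nhdsNE_zero).eventually
      (eventually_ne_cobounded 0)] with z hz hfz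
    simpa [hz] using hfz
  have hH : AnalyticAt ℂ H 0 := hf.analyticAt_update_inv_comp_inv hlim
  obtain ⟨k, G, hG, hG0, hHG⟩ := hH.exists_eventuallyEq_pow_smul_nonzero_iff.mpr fun h =>
    ((h.filter_mono nhdsWithin_le_nhds).and hH_ne).exists.elim fun z hz => hz.2 hz.1
  refine ⟨k, ?_⟩
  have hf_eq : f =ᶠ[cobounded ℂ] fun w => w ^ k * (G w⁻¹)⁻¹ := by
    filter_upwards [tendsto_inv₀_cobounded'.eventually hH_eq,
      tendsto_inv₀_cobounded.eventually hHG] with w h₁ h₂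
    rw [inv_inv] at h₁
    rw [← inv_inv (f w), ← h₁, h₂, sub_zero, smul_eq_mul, mul_inv, inv_pow, inv_inv]
  have hG_inv : Tendsto (fun w => (G w⁻¹)⁻¹) (cobounded ℂ) (𝓝 (G 0)⁻¹) :=
    ((hG.continuousAt.tendsto.comp tendsto_inv₀_cobounded).inv₀ hG0)
  simpa using hf_eq.trans_isBigO ((isBigO_refl (· ^ k) _).mul (hG_inv.isBigO_one ℂ))

theorem Differentiable.iteratedDeriv_eq_zero_of_isBigO_pow {f : ℂ → ℂ} (hf : Differentiable ℂ f)
    {k n : ℕ} (hfk : f =O[cobounded ℂ] (· ^ k)) (hkn : k < n) : iteratedDeriv n f 0 = 0 := by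
  obtain ⟨C, hC⟩ := hfk.bound
  obtain ⟨R₀, hR₀⟩ := (hasBasis_cobounded_norm.eventually_iff.mp hC).imp fun _ => And.right
  have hbound : ∀ᶠ R in atTop, ‖iteratedDeriv n f 0‖ ≤ n.factorial * C * (R ^ (n - k))⁻¹ := by
    filter_upwards [eventually_ge_atTop (max R₀ 1)] with R hR
    have hR0 : 0 < R := zero_lt_one.trans_le (le_of_max_le_right hR)
    have hsphere : ∀ z ∈ Metric.sphere (0 : ℂ) R, ‖f z‖ ≤ C * R ^ k := fun z hz => by
      rw [mem_sphere_zero_iff_norm] at hz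
      have := hR₀ (hz ▸ le_of_max_le_left hR : R₀ ≤ ‖z‖)
      rwa [norm_pow, hz] at this
    calc ‖iteratedDeriv n f 0‖ ≤ n.factorial * (C * R ^ k) / R ^ n :=
          Complex.norm_iteratedDeriv_le_of_forall_mem_sphere_norm_le n hR0 hf.diffContOnCl hsphere
      _ = n.factorial * C * (R ^ (n - k))⁻¹ := by
          rw [← Nat.add_sub_of_le hkn.le, pow_add, Nat.add_sub_cancel_left]
          field_simp
  have hlim : Tendsto (fun R : ℝ => n.factorial * C * (R ^ (n - k))⁻¹) atTop (𝓝 0) := by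
    simpa using (tendsto_inv_atTop_zero.comp (tendsto_pow_atTop (by omega))).const_mul
      ((n.factorial : ℝ) * C)
  exact norm_le_zero_iff.mp (ge_of_tendsto hlim hbound)

theorem Differentiable.exists_polynomial_of_isBigO_pow {f : ℂ → ℂ} (hf : Differentiable ℂ f)
    {k : ℕ} (hfk : f =O[cobounded ℂ] (· ^ k)) : ∃ p : ℂ[X], ∀ z, f z = p.eval z := by
  refine ⟨∑ n ∈ Finset.range (k + 1), C ((n.factorial : ℂ)⁻¹ * iteratedDeriv n f 0) * X ^ n,
    fun z => (Complex.hasSum_taylorSeries_of_entire hf 0 z).unique ?_⟩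
  have hterm : ∀ n, (n.factorial : ℂ)⁻¹ • (z - 0) ^ n • iteratedDeriv n f 0 =
      ((n.factorial : ℂ)⁻¹ * iteratedDeriv n f 0) * z ^ n := fun n => by
    rw [sub_zero, smul_eq_mul, smul_eq_mul]
    ring
  simp only [eval_finsetSum, eval_mul, eval_C, eval_pow, eval_X, ← hterm]
  refine hasSum_sum_of_ne_finset_zero fun n hn => ?_
  rw [Finset.mem_range, not_lt] at hn
  simp [hf.iteratedDeriv_eq_zero_of_isBigO_pow hfk hn]

theorem Differentiable.exists_eq_mul_add_of_leftInverse {f g : ℂ → ℂ} (hf : Differentiable ℂ f)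
    (hg : Differentiable ℂ g) (hgf : LeftInverse g f) : ∃ a b : ℂ, ∀ z, f z = a * z + b := by
  have hlim : Tendsto f (cobounded ℂ) (cobounded ℂ) := by
    simpa only [Metric.cobounded_eq_cocompact] using hgf.tendsto_cocompact hg.continuous
  obtain ⟨k, hfk⟩ := hf.exists_isBigO_pow_of_tendsto_cobounded hlim
  obtain ⟨p, hp⟩ := hf.exists_polynomial_of_isBigO_pow hfk
  have hderiv : ∀ z, p.derivative.eval z ≠ 0 := fun z => by
    rw [← Polynomial.deriv, ← funext hp]
    exact deriv_ne_zero_of_leftInverse hgf (hg _) (hf z)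
  refine ⟨p.coeff 1, p.coeff 0, fun z => ?_⟩
  rw [hp, eq_X_add_C_of_natDegree_le_one (natDegree_le_one_of_eval_derivative_ne_zero hderiv)]
  simp

theorem Differentiable.exists_eq_mul_add_of_iterate_eq_id {f : ℂ → ℂ} (hf : Differentiable ℂ f)
    {m : ℕ} (hm : 1 ≤ m) (hid : f^[m] = id) : ∃ a b : ℂ, a ^ m = 1 ∧ ∀ z, f z = a * z + b := by
  have hgf : LeftInverse f^[m - 1] f := fun z => by
    rw [← iterate_succ_apply, Nat.succ_eq_add_one, Nat.sub_add_cancel hm, hid, id]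
  obtain ⟨a, b, hab⟩ := hf.exists_eq_mul_add_of_leftInverse (hf.iterate _) hgf
  rw [funext hab] at hid
  exact ⟨a, b, pow_eq_one_of_iterate_eq_id hid, hab⟩

theorem Differentiable.iterate_eq_id_of_iterate_add_eq {f : ℂ → ℂ} (hf : Differentiable ℂ f)
    (hnc : ¬ ∃ c, f = fun _ => c) {j k : ℕ} (h : f^[j + k] = f^[k]) : f^[j] = id := by
  have hopen : IsOpenMap f :=
    (Complex.analyticOnNhd_univ_iff_differentiable.mpr hf).is_constant_or_isOpenMap.resolve_left
      fun ⟨c, hc⟩ => hnc ⟨c, funext hc⟩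
  have hopen_iter : ∀ i, IsOpenMap f^[i] := fun i => by
    induction i with
    | zero => exact IsOpenMap.id
    | succ i ih => exact iterate_succ f i ▸ ih.comp hopen
  refine (Complex.analyticOnNhd_univ_iff_differentiable.mpr (hf.iterate j)).eq_of_eventuallyEq
    analyticOnNhd_id (z₀ := f^[k] 0) ?_
  filter_upwards [(hopen_iter k).isOpen_range.mem_nhds (Set.mem_range_self 0)]
  rintro _ ⟨z, rfl⟩
  rw [← iterate_add_apply, h, id]

theorem stmt_16 :
    (∀ f : ℂ → ℂ, Differentiable ℂ f → Function.Injective f →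
      ∀ m : ℕ, 1 ≤ m → f^[m] = id →
        ∃ a b : ℂ, a ^ m = 1 ∧ ∀ z, f z = a * z + b) ∧
    (∀ f : ℂ → ℂ, Differentiable ℂ f → (¬ ∃ c, f = fun _ => c) →
      ∀ n k : ℕ, k < n → f^[n] = f^[k] →
        ∃ a b : ℂ, a ^ (n - k) = 1 ∧ ∀ z, f z = a * z + b) := by
  refine ⟨fun f hf _ m hm hid => hf.exists_eq_mul_add_of_iterate_eq_id hm hid,
    fun f hf hnc n k hkn h => hf.exists_eq_mul_add_of_iterate_eq_id (by omega) ?_⟩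
  exact hf.iterate_eq_id_of_iterate_add_eq hnc (by rwa [Nat.sub_add_cancel hkn.le])
end

section
/- Let f : ℝ² → ℝ² be continuous with f ∘ f = f, f(x,y) = (g(x,y), 0) where g is C¹, g(x,0) = x for all x, and ∂g/∂x ≠ 0 everywhere on an open set U ⊇ ℝ×{0} such that each horizontal slice U ∩ (ℝ×{y}) is connected. Then φ : U → φ(U) given by φ(x,y) = (g(x,y), y) is a C¹-diffeomorphism onto its image conjugating f|_U with the projection P(x,y) = (x,0), i.e. φ ∘ f = P ∘ φ on U. -/
/-!
On each horizontal line `y = const` the slice of `U` is an interval on which `x ↦ g (x, y)` has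
nonvanishing derivative, so by Rolle's theorem it is injective; as `φ` preserves `y`, `φ` is
injective on `U`. The derivative of `φ` is `(Dg, snd)`, which is invertible because `∂g/∂x ≠ 0`.
By the inverse function theorem `φ` is then open on `U` and its inverse on `φ '' U` agrees near
each point with a `C¹` local inverse. Finally `g (x, 0) = x` gives `φ (f p) = (g p, 0) = P (φ p)`.
-/

open Set Function Filter Topology

theorem Set.OrdConnected.injOn_of_hasDerivAt_ne_zero {f f' : ℝ → ℝ} {s : Set ℝ}
    (hs : s.OrdConnected) (hf : ∀ x ∈ s, HasDerivAt f (f' x) x) (hf' : ∀ x ∈ s, f' x ≠ 0) :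
    InjOn f s := by
  have hne : ∀ a ∈ s, ∀ b ∈ s, a < b → f a ≠ f b := by
    intro a ha b hb hab hfab
    have hIcc : Icc a b ⊆ s := hs.out ha hb
    obtain ⟨c, hc, hc0⟩ := exists_hasDerivAt_eq_zero hab
      (fun x hx => (hf x (hIcc hx)).continuousAt.continuousWithinAt) hfab
      (fun x hx => hf x (hIcc (Ioo_subset_Icc_self hx)))
    exact hf' c (hIcc (Ioo_subset_Icc_self hc)) hc0
  intro a ha b hb hfab
  rcases lt_trichotomy a b with h | h | h
  · exact absurd hfab (hne a ha b hb h)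
  · exact h
  · exact absurd hfab.symm (hne b hb a ha h)

theorem injOn_mk_snd_of_fderiv_fst_ne_zero {U : Set (ℝ × ℝ)} {g : ℝ × ℝ → ℝ}
    (hslice : ∀ y : ℝ, {x : ℝ | (x, y) ∈ U}.OrdConnected)
    (hg : ∀ p ∈ U, DifferentiableAt ℝ g p) (hdx : ∀ p ∈ U, fderiv ℝ g p (1, 0) ≠ 0) :
    InjOn (fun p => (g p, p.2)) U := by
  rintro ⟨x₁, y⟩ h₁ ⟨x₂, y'⟩ h₂ h
  obtain ⟨hgeq, rfl⟩ := Prod.ext_iff.1 h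
  have hderiv : ∀ x ∈ {x : ℝ | (x, y) ∈ U},
      HasDerivAt (fun x => g (x, y)) (fderiv ℝ g (x, y) (1, 0)) x := fun x hx =>
    (hg _ hx).hasFDerivAt.comp_hasDerivAt x ((hasDerivAt_id x).prodMk (hasDerivAt_const x y))
  rw [(hslice y).injOn_of_hasDerivAt_ne_zero hderiv (fun x hx => hdx _ hx) h₁ h₂ hgeq]

theorem LinearMap.injective_prod_snd {R M N P : Type*} [Semiring R] [AddCommGroup M]
    [AddCommGroup N] [AddCommGroup P] [Module R M] [Module R N] [Module R P]
    (ℓ : M × N →ₗ[R] P) (h : Injective (ℓ ∘ₗ LinearMap.inl R M N)) :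
    Injective (ℓ.prod (LinearMap.snd R M N)) := by
  rw [injective_iff_map_eq_zero]
  rintro ⟨x, y⟩ hxy
  simp only [LinearMap.prod_apply, Function.prod, LinearMap.coe_snd, Prod.mk_eq_zero] at hxy
  obtain ⟨hℓ, rfl⟩ := hxy
  rw [(injective_iff_map_eq_zero _).1 h x hℓ, Prod.mk_zero_zero]

theorem exists_hasFDerivAt_equiv_mk_snd {𝕜 : Type*} [NontriviallyNormedField 𝕜]
    [CompleteSpace 𝕜] {g : 𝕜 × 𝕜 → 𝕜} {p : 𝕜 × 𝕜} (hg : DifferentiableAt 𝕜 g p)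
    (hdx : fderiv 𝕜 g p (1, 0) ≠ 0) :
    ∃ e : (𝕜 × 𝕜) ≃L[𝕜] 𝕜 × 𝕜,
      HasFDerivAt (fun q => (g q, q.2)) (e : (𝕜 × 𝕜) →L[𝕜] 𝕜 × 𝕜) p := by
  set L := (fderiv 𝕜 g p).prod (ContinuousLinearMap.snd 𝕜 𝕜 𝕜)
  have hfst : Injective ((fderiv 𝕜 g p : 𝕜 × 𝕜 →ₗ[𝕜] 𝕜) ∘ₗ LinearMap.inl 𝕜 𝕜 𝕜) := by
    intro a b hab
    have hsmul : ∀ c : 𝕜, fderiv 𝕜 g p (c, 0) = c • fderiv 𝕜 g p (1, 0) := fun c => by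
      rw [← map_smul, Prod.smul_mk, smul_eq_mul, mul_one, smul_zero]
    exact smul_left_injective 𝕜 hdx (by simp only [← hsmul]; exact hab)
  have hinj : Injective L := LinearMap.injective_prod_snd _ hfst
  have hsurj : Surjective L := LinearMap.injective_iff_surjective.1 hinj
  exact ⟨.ofBijective L (LinearMap.ker_eq_bot.2 hinj) (LinearMap.range_eq_top.2 hsurj),
    hg.hasFDerivAt.prodMk hasFDerivAt_snd⟩

section InverseFunction

variable {𝕂 : Type*} [RCLike 𝕂] {E F : Type*} [NormedAddCommGroup E] [NormedSpace 𝕂 E]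
  [CompleteSpace E] [NormedAddCommGroup F] [NormedSpace 𝕂 F] {f : E → F} {U : Set E}
  {n : WithTop ℕ∞}

theorem ContDiffOn.isOpen_image (hf : ContDiffOn 𝕂 n f U) (hU : IsOpen U) (hn : n ≠ 0)
    (hf' : ∀ p ∈ U, ∃ f' : E ≃L[𝕂] F, HasFDerivAt f (f' : E →L[𝕂] F) p) :
    IsOpen (f '' U) := by
  rw [isOpen_iff_mem_nhds]
  rintro _ ⟨p, hp, rfl⟩
  obtain ⟨f', hf'p⟩ := hf' p hp
  rw [← ((hf.contDiffAt (hU.mem_nhds hp)).hasStrictFDerivAt' hf'p hn).map_nhds_eq_of_equiv]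
  exact image_mem_map (hU.mem_nhds hp)

theorem ContDiffOn.invFunOn_image (hf : ContDiffOn 𝕂 n f U) (hU : IsOpen U) (hn : n ≠ 0)
    (hf' : ∀ p ∈ U, ∃ f' : E ≃L[𝕂] F, HasFDerivAt f (f' : E →L[𝕂] F) p)
    (hinj : InjOn f U) : ContDiffOn 𝕂 n (invFunOn f U) (f '' U) := by
  rintro _ ⟨p, hp, rfl⟩
  obtain ⟨f', hf'p⟩ := hf' p hp
  have hfp : ContDiffAt 𝕂 n f p := hf.contDiffAt (hU.mem_nhds hp)
  have hstrict := hfp.hasStrictFDerivAt' hf'p hn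
  have hloc : invFunOn f U =ᶠ[𝓝 (f p)] hfp.localInverse hf'p hn := by
    filter_upwards [hstrict.eventually_right_inverse,
      hstrict.localInverse_tendsto (hU.mem_nhds hp)] with q hq hqU
    calc invFunOn f U q = invFunOn f U (f (hstrict.localInverse f f' p q)) := by rw [hq]
      _ = hstrict.localInverse f f' p q := hinj.leftInvOn_invFunOn hqU
  exact ((hfp.to_localInverse hf'p hn).congr_of_eventuallyEq hloc).contDiffWithinAt

end InverseFunction

theorem stmt_19_general (U : Set (ℝ × ℝ)) (hU : IsOpen U)
    (hslice : ∀ y : ℝ, Convex ℝ {x : ℝ | (x, y) ∈ U})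
    (g : ℝ × ℝ → ℝ) (hg : ContDiff ℝ 1 g)
    (hgx : ∀ x : ℝ, g (x, 0) = x)
    (hdx : ∀ p ∈ U, fderiv ℝ g p (1, 0) ≠ 0)
    (f : ℝ × ℝ → ℝ × ℝ) (hfdef : f = fun p => (g p, 0)) :
    let φ : ℝ × ℝ → ℝ × ℝ := fun p => (g p, p.2)
    let P : ℝ × ℝ → ℝ × ℝ := fun p => (p.1, 0)
    Set.InjOn φ U ∧ ContDiffOn ℝ 1 φ U ∧ IsOpen (φ '' U) ∧
      (∃ ψ : ℝ × ℝ → ℝ × ℝ, ContDiffOn ℝ 1 ψ (φ '' U) ∧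
        (∀ p ∈ U, ψ (φ p) = p) ∧ ∀ q ∈ φ '' U, φ (ψ q) = q) ∧
      ∀ p ∈ U, φ (f p) = P (φ p) := by
  intro φ P
  have hgdiff : Differentiable ℝ g := hg.differentiable one_ne_zero
  have hφ : ContDiffOn ℝ 1 φ U := (hg.prodMk contDiff_snd).contDiffOn
  have hinj : InjOn φ U := injOn_mk_snd_of_fderiv_fst_ne_zero
    (fun y => (hslice y).ordConnected) (fun p _ => hgdiff p) hdx
  have hderiv : ∀ p ∈ U, ∃ e : (ℝ × ℝ) ≃L[ℝ] ℝ × ℝ, HasFDerivAt φ (e : (ℝ × ℝ) →L[ℝ] ℝ × ℝ) p :=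
    fun p hp => exists_hasFDerivAt_equiv_mk_snd (hgdiff p) (hdx p hp)
  refine ⟨hinj, hφ, hφ.isOpen_image hU one_ne_zero hderiv,
    ⟨invFunOn φ U, hφ.invFunOn_image hU one_ne_zero hderiv hinj,
      fun p hp => hinj.leftInvOn_invFunOn hp, ?_⟩, ?_⟩
  · rintro _ ⟨p, hp, rfl⟩
    exact invFunOn_eq ⟨p, hp, rfl⟩
  · intro p _
    simp only [φ, P, hfdef, hgx]

theorem stmt_19 (U : Set (ℝ × ℝ)) (hU : IsOpen U)
    (hUx : Set.univ ×ˢ ({0} : Set ℝ) ⊆ U)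
    (hslice : ∀ y : ℝ, Convex ℝ {x : ℝ | (x, y) ∈ U})
    (g : ℝ × ℝ → ℝ) (hg : ContDiff ℝ 1 g)
    (hgx : ∀ x : ℝ, g (x, 0) = x)
    (hdx : ∀ p ∈ U, fderiv ℝ g p (1, 0) ≠ 0)
    (f : ℝ × ℝ → ℝ × ℝ) (hfdef : f = fun p => (g p, 0))
    (hidem : f ∘ f = f) :
    let φ : ℝ × ℝ → ℝ × ℝ := fun p => (g p, p.2)
    let P : ℝ × ℝ → ℝ × ℝ := fun p => (p.1, 0)
    Set.InjOn φ U ∧ ContDiffOn ℝ 1 φ U ∧ IsOpen (φ '' U) ∧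
      (∃ ψ : ℝ × ℝ → ℝ × ℝ, ContDiffOn ℝ 1 ψ (φ '' U) ∧
        (∀ p ∈ U, ψ (φ p) = p) ∧ ∀ q ∈ φ '' U, φ (ψ q) = q) ∧
      ∀ p ∈ U, φ (f p) = P (φ p) :=
  stmt_19_general U hU hslice g hg hgx hdx f hfdef
end
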